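/- Let n ≥ 4 be an integer and let a, g : ℕ → ℝ satisfy a(1) = 0, a(j) = g(n−j) for all 1 ≤ j ≤ n−1, and g(3) = 0. Suppose that for all integers k, i with 3 ≤ k ≤ n−3 and 1 ≤ i ≤ n−k−2 one has g(k+1) + g(k+i) + a(i+1) ≥ g(k) + a(i) + g(k+i+1). Then g(h) ≥ 0 for every integer h with 3 ≤ h ≤ n−2. -/

import Mathlib

/-!
Rearranged, the F-curve inequality for `(k, i)` says that `g k - g (k + 1)` is at most the
increment at `i` of `i ↦ a (i + 1) - g (k + i + 1)`. Summing over `1 ≤ i ≤ n - k - 2` telescopes,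
and the symmetry `a j = g (n - j)` turns the endpoint values into `a (n - k - 1) = g (k + 1)` and
`g (n - 1) = a 1 = 0`, giving `(n - k - 2) (g k - g (k + 1)) ≤ 2 g (k + 1)`. Hence
`g (k + 1) ≥ 0` whenever `g k ≥ 0`, and induction from `g 3 = 0` concludes.
-/

theorem nsmul_le_sub_of_le_sub_succ {M : Type*} [AddCommGroup M] [PartialOrder M]
    [IsOrderedAddMonoid M] {f : ℕ → M} {c : M} {m : ℕ}
    (h : ∀ i < m, c ≤ f (i + 1) - f i) : m • c ≤ f m - f 0 := by
  calc m • c = ∑ _i ∈ Finset.range m, c := by simp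
    _ ≤ ∑ i ∈ Finset.range m, (f (i + 1) - f i) :=
        Finset.sum_le_sum fun i hi => h i (Finset.mem_range.mp hi)
    _ = f m - f 0 := Finset.sum_range_sub f m

theorem mul_sub_succ_le_two_mul_of_fCurve {n : ℕ} {a g : ℕ → ℝ} (h1 : a 1 = 0)
    (hsym : ∀ j : ℕ, 1 ≤ j → j ≤ n - 1 → a j = g (n - j))
    {k : ℕ} (hkn : k + 2 ≤ n) (hyp : ∀ i : ℕ, 1 ≤ i → i ≤ n - k - 2 →
      g k + a i + g (k + i + 1) ≤ g (k + 1) + g (k + i) + a (i + 1)) :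
    ((n - k - 2 : ℕ) : ℝ) * (g k - g (k + 1)) ≤ 2 * g (k + 1) := by
  have htele := nsmul_le_sub_of_le_sub_succ (m := n - k - 2) (c := g k - g (k + 1))
    (f := fun i => a (i + 1) - g (k + (i + 1))) fun i hi => by
      have hfc := hyp (i + 1) (by omega) (by omega)
      rw [show k + (i + 1) + 1 = k + (i + 1 + 1) from rfl] at hfc
      linarith
  have ha : a (n - k - 2 + 1) = g (k + 1) := by
    rw [hsym _ (by omega) (by omega)]
    congr 1
    omega
  have hg : g (k + (n - k - 2 + 1)) = 0 := by
    rw [show k + (n - k - 2 + 1) = n - 1 by omega, ← h1, hsym 1 le_rfl (by omega)]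
  simp only [ha, hg, h1, nsmul_eq_mul] at htele
  linarith

theorem stmt_12_general (n : ℕ) (a g : ℕ → ℝ) (h1 : a 1 = 0)
    (hsym : ∀ j : ℕ, 1 ≤ j → j ≤ n - 1 → a j = g (n - j)) (hg3 : g 3 = 0)
    (hyp : ∀ k i : ℕ, 3 ≤ k → k ≤ n - 3 → 1 ≤ i → i ≤ n - k - 2 →
      g k + a i + g (k + i + 1) ≤ g (k + 1) + g (k + i) + a (i + 1)) :
    ∀ h : ℕ, 3 ≤ h → h ≤ n - 2 → 0 ≤ g h := by
  intro h h3
  induction h, h3 using Nat.le_induction with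
  | base => intro _; rw [hg3]
  | succ k hk3 ih =>
    intro hkn
    have hgk : 0 ≤ g k := ih (by omega)
    have hstep := mul_sub_succ_le_two_mul_of_fCurve h1 hsym (by omega) (hyp k · hk3 (by omega))
    have hc : (0 : ℝ) ≤ ((n - k - 2 : ℕ) : ℝ) := Nat.cast_nonneg _
    nlinarith [mul_nonneg hc hgk]

/-- Positivity of the coefficients `[h]_{{1,2,3}}` in the case `m = n-3`:
from the normalization `g(3) = 0` and the F-curve inequalities of the
partitions `(1, k_{{1,2,3}}, i, *)`, all `g(h)` with `3 ≤ h ≤ n-2` are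
nonnegative. -/
theorem stmt_12 (n : ℕ) (hn : 4 ≤ n) (a g : ℕ → ℝ) (h1 : a 1 = 0)
    (hsym : ∀ j : ℕ, 1 ≤ j → j ≤ n - 1 → a j = g (n - j)) (hg3 : g 3 = 0)
    (hyp : ∀ k i : ℕ, 3 ≤ k → k ≤ n - 3 → 1 ≤ i → i ≤ n - k - 2 →
      g k + a i + g (k + i + 1) ≤ g (k + 1) + g (k + i) + a (i + 1)) :
    ∀ h : ℕ, 3 ≤ h → h ≤ n - 2 → 0 ≤ g h :=
  stmt_12_general n a g h1 hsym hg3 hyp
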